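/- If a ℂ-derivation D of π₀ commutes with all the derivations Q_i, i.e. D ∘ Q_i = Q_i ∘ D for every i ∈ {0, …, l}, then D = 0. (There are no nonzero 𝔫₊-invariant vector fields on N₊/A₊.) -/

import Mathlib

open MvPolynomial

noncomputable section

/-- The algebra of differential polynomials in the variables `u_i^{(n)}`, `1 ≤ i ≤ l`, `n ≥ 0`. -/
abbrev Pi0 (l : ℕ) : Type := MvPolynomial (Fin l × ℕ) ℂ

/-- The variable `u_i^{(n)}`. -/
def u {l : ℕ} (i : Fin l) (n : ℕ) : Pi0 l := X (i, n)

/-- The derivation `∂` with `∂ u_i^{(n)} = u_i^{(n+1)}`. -/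
def pa (l : ℕ) : Derivation ℂ (Pi0 l) (Pi0 l) :=
  mkDerivation ℂ (fun p => X (p.1, p.2 + 1))

/-- An affine generalized Cartan matrix of size `(l+1) × (l+1)`: an indecomposable integer
matrix with `a_{ii} = 2`, `a_{ij} ≤ 0` for `i ≠ j`, `a_{ij} = 0 ↔ a_{ji} = 0`, symmetrizable
by positive rationals `d_i`, and admitting a vector of positive integer labels `(a_0,…,a_l)`
with `∑_j a_j a_{ij} = 0` for all `i`. -/
structure AffineGCM (l : ℕ) where
  A : Matrix (Fin (l+1)) (Fin (l+1)) ℤ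
  diag : ∀ i, A i i = 2
  offdiag : ∀ i j, i ≠ j → A i j ≤ 0
  zeroIff : ∀ i j, A i j = 0 ↔ A j i = 0
  d : Fin (l+1) → ℚ
  d_pos : ∀ i, 0 < d i
  dsymm : ∀ i j, d i * A i j = d j * A j i
  label : Fin (l+1) → ℕ
  label_pos : ∀ i, 0 < label i
  null : ∀ i, ∑ j, (label j : ℤ) * A i j = 0
  indec : ∀ S : Set (Fin (l+1)), (∀ i ∈ S, ∀ j ∉ S, A i j = 0) → S = ∅ ∨ S = Set.univ

namespace AffineGCM

variable {l : ℕ} (K : AffineGCM l)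

/-- The symmetrized bilinear form `(α_i, α_j) := d_i a_{ij}`. -/
def B (i j : Fin (l+1)) : ℂ := (K.d i : ℂ) * (K.A i j : ℂ)

/-- `u_j^{(n)}` for `j = 0,…,l`, where `u_0^{(n)} := -(1/a_0) ∑_{i=1}^l a_i u_i^{(n)}`.
Here `j = 0` is `Fin.cases`' zero case and `j = i.succ` corresponds to `u_i^{(n)}`. -/
def Uv (j : Fin (l+1)) (n : ℕ) : Pi0 l :=
  Fin.cases (-(1 / (K.label 0 : ℂ)) • ∑ i : Fin l, (K.label i.succ : ℂ) • u i n)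
    (fun i => u i n) j

/-- The Faà di Bruno polynomials: `B_i^{(0)} = 1`,
`B_i^{(n+1)} = -u_i^{(0)} B_i^{(n)} + ∂ B_i^{(n)}`. -/
def FdB (i : Fin (l+1)) : ℕ → Pi0 l
  | 0 => 1
  | n+1 => -(K.Uv i 0) * FdB i n + pa l (FdB i n)

/-- The unique `ℂ`-derivation `Q_i` of `π₀` with `Q_i u_j^{(n)} = -(α_i,α_j) B_i^{(n)}`
for `1 ≤ j ≤ l`, `n ≥ 0`. -/
def Q (i : Fin (l+1)) : Derivation ℂ (Pi0 l) (Pi0 l) :=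
  mkDerivation ℂ (fun p => -(K.B i p.1.succ) • K.FdB i p.2)

end AffineGCM

/-!
Give `u_i^{(n)}` the weight `n + 1`, so that each `Q_i` lowers weights by one, and for
`r ∈ ℂ^l` let `r̃ ∈ ℂ^{l+1}` be its extension with `∑ a_i r̃_i = 0`, as `u_0` extends `u`.
The map `r ↦ (∑_i a_i r̃_i (α_i, α_j))_{j ≥ 1}` is invertible, since the kernel of the
symmetrized affine Cartan matrix is spanned by `(a_i)`.

If a derivation `R` kills the variables of order `< N` and sends `u_k^{(N)}` to constants `r_k`,
then `R (Q_i u_j^{(N+1)}) = (α_i, α_j) r̃_i`, because `B_i^{(N+1)} = -u_i^{(N)} + (lower order)`;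
on the other hand `∑ a_i Q_i V` never has a constant term. For `D` commuting with the `Q_i`
(and `R = D`), the `D u_k^{(N)}` lie in the common kernel of the `Q_i`, which is `ℂ`, and the two
facts put `r` in the kernel of the invertible map, so `D` kills the order `N` too. The common
kernel is `ℂ` because the brackets `∑ a_i [Q_i, R]`, with the map inverted, realise every
`∂/∂u_j^{(N)}` on polynomials of order `≤ N` by derivations vanishing on that kernel.
-/

open Matrix

lemma Derivation.finset_sum_apply {R A M ι : Type*} [CommSemiring R] [CommSemiring A]
    [AddCommMonoid M] [Algebra R A] [Module A M] [Module R M] (s : Finset ι)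
    (D : ι → Derivation R A M) (a : A) : (∑ i ∈ s, D i) a = ∑ i ∈ s, D i a := by
  simp [← Derivation.coeFnAddMonoidHom_apply]

namespace MvPolynomial

variable {σ R : Type*} [CommRing R]

lemma pderiv_ne_zero_of_mem_vars [IsDomain R] [CharZero R] {f : MvPolynomial σ R} {i : σ}
    (hi : i ∈ f.vars) : pderiv i f ≠ 0 := by
  classical
  obtain ⟨m, hm, hmi⟩ := (mem_vars_iff_mem_support i).1 hi
  have hle : Finsupp.single i 1 ≤ m :=
    Finsupp.single_le_iff.2 (Nat.one_le_iff_ne_zero.2 (Finsupp.mem_support_iff.1 hmi))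
  intro h
  have hcoeff := coeff_pderiv (i := i) f (m - Finsupp.single i 1)
  rw [h, coeff_zero, tsub_add_cancel_of_le hle] at hcoeff
  exact mul_ne_zero (mem_support_iff.1 hm) (Nat.cast_add_one_ne_zero _) hcoeff.symm

lemma derivation_eq_zero_of_mem_supported {D : Derivation R (MvPolynomial σ R) (MvPolynomial σ R)}
    {s : Set σ} (hD : ∀ i ∈ s, D (X i) = 0) {P : MvPolynomial σ R} (hP : P ∈ supported R s) :
    D P = 0 :=
  derivation_eqOn_supported (D₂ := 0) hD hP

lemma constantCoeff_derivation_eq_zero {D : Derivation R (MvPolynomial σ R) (MvPolynomial σ R)}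
    (hD : ∀ i, constantCoeff (D (X i)) = 0) (P : MvPolynomial σ R) : constantCoeff (D P) = 0 := by
  induction P using MvPolynomial.induction_on with
  | C a => rw [derivation_C, map_zero]
  | add p q hp hq => rw [map_add, map_add, hp, hq, add_zero]
  | mul_X p i hp => simp [D.leibniz, hp, hD]

variable {M : Type*} [AddCommMonoid M] {w : σ → M}

def IsWeightedHomogeneousDerivation (w : σ → M)
    (D : Derivation R (MvPolynomial σ R) (MvPolynomial σ R)) (e : M) : Prop :=
  ∀ i, (D (X i)).IsWeightedHomogeneous w (w i + e)

namespace IsWeightedHomogeneousDerivation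

variable {D D' : Derivation R (MvPolynomial σ R) (MvPolynomial σ R)} {e e' : M}

lemma apply (hD : IsWeightedHomogeneousDerivation w D e) {P : MvPolynomial σ R} {d : M}
    (hP : P.IsWeightedHomogeneous w d) : (D P).IsWeightedHomogeneous w (d + e) := by
  have hmonomial : ∀ s a, ∃ n, (monomial s a).IsWeightedHomogeneous w n ∧
      (D (monomial s a)).IsWeightedHomogeneous w (n + e) := by
    refine induction_on_monomial (fun a => ⟨0, isWeightedHomogeneous_C w a, ?_⟩) ?_
    · rw [derivation_C]
      exact isWeightedHomogeneous_zero R w _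
    · rintro p i ⟨n, hp, hDp⟩
      refine ⟨n + w i, hp.mul (isWeightedHomogeneous_X R w i), ?_⟩
      rw [D.leibniz, smul_eq_mul, smul_eq_mul]
      refine IsWeightedHomogeneous.add ?_ ?_
      · simpa only [add_assoc] using hp.mul (hD i)
      · simpa only [add_comm, add_left_comm] using (isWeightedHomogeneous_X R w i).mul hDp
  induction hP using IsWeightedHomogeneous.induction_on with
  | zero => simpa using isWeightedHomogeneous_zero R w (d + e)
  | add p q _ _ hp hq => simpa only [map_add] using hp.add hq
  | monomial s a hs =>
    obtain ⟨n, hn, hDn⟩ := hmonomial s a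
    rcases eq_or_ne a 0 with rfl | ha
    · simpa using isWeightedHomogeneous_zero R w (d + e)
    · rwa [← hn.inj_right ((monomial_eq_zero).not.2 ha) (isWeightedHomogeneous_monomial w s a hs)]

lemma lie (hD : IsWeightedHomogeneousDerivation w D e)
    (hD' : IsWeightedHomogeneousDerivation w D' e') :
    IsWeightedHomogeneousDerivation w ⁅D, D'⁆ (e' + e) := fun i => by
  rw [Derivation.commutator_apply, ← add_assoc]
  refine (hD.apply (hD' i)).sub ?_
  simpa only [add_right_comm _ e e'] using hD'.apply (hD i)

lemma sum_smul {ι : Type*} (s : Finset ι) (c : ι → R)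
    {D : ι → Derivation R (MvPolynomial σ R) (MvPolynomial σ R)}
    (hD : ∀ j ∈ s, IsWeightedHomogeneousDerivation w (D j) e) :
    IsWeightedHomogeneousDerivation w (∑ j ∈ s, c j • D j) e := fun i => by
  rw [Derivation.finset_sum_apply]
  exact IsWeightedHomogeneous.sum _ _ _ fun j hj => by
    rw [Derivation.smul_apply, smul_eq_C_mul]
    exact (hD j hj i).C_mul (c j)

end IsWeightedHomogeneousDerivation

section PositiveWeights

variable {w : σ → ℤ}

lemma weight_pos_of_ne_zero (hw : ∀ i, 0 < w i) {m : σ →₀ ℕ} (hm : m ≠ 0) :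
    0 < Finsupp.weight w m := by
  rw [Finsupp.weight_apply, Finsupp.sum]
  exact Finset.sum_pos (fun i hi => nsmul_pos (hw i) (Finsupp.mem_support_iff.1 hi))
    (Finsupp.support_nonempty_iff.2 hm)

lemma IsWeightedHomogeneous.eq_zero_of_neg (hw : ∀ i, 0 < w i) {P : MvPolynomial σ R} {d : ℤ}
    (hP : P.IsWeightedHomogeneous w d) (hd : d < 0) : P = 0 := by
  ext m
  refine hP.coeff_eq_zero m fun hm => ?_
  rcases eq_or_ne m 0 with rfl | hm0
  · simp [← hm] at hd
  · exact (weight_pos_of_ne_zero hw hm0).not_gt (hm ▸ hd)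

lemma IsWeightedHomogeneous.eq_C_of_zero (hw : ∀ i, 0 < w i) {P : MvPolynomial σ R}
    (hP : P.IsWeightedHomogeneous w 0) : P = C (constantCoeff P) := by
  classical
  ext m
  rcases eq_or_ne m 0 with rfl | hm
  · simp [constantCoeff_eq]
  · rw [coeff_C, if_neg (Ne.symm hm)]
    exact hP.coeff_eq_zero m (weight_pos_of_ne_zero hw hm).ne'

end PositiveWeights

end MvPolynomial

namespace Matrix

variable {ι 𝕜 : Type*} [Fintype ι] [Field 𝕜] [LinearOrder 𝕜] [IsStrictOrderedRing 𝕜]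

theorem exists_eq_smul_of_mulVec_eq_zero {M : Matrix ι ι 𝕜} (hM : M.IsSymm)
    (hoff : ∀ i j, i ≠ j → M i j ≤ 0)
    (hind : ∀ S : Set ι, (∀ i ∈ S, ∀ j ∉ S, M i j = 0) → S = ∅ ∨ S = Set.univ)
    {a : ι → 𝕜} (ha : ∀ i, 0 < a i) (hMa : M *ᵥ a = 0) {c : ι → 𝕜} (hc : M *ᵥ c = 0) :
    ∃ μ : 𝕜, c = μ • a := by
  rcases isEmpty_or_nonempty ι with _ | ⟨⟨i₀⟩⟩
  · exact ⟨0, Subsingleton.elim _ _⟩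
  set z : ι → 𝕜 := fun i => c i / a i
  have hz : ∀ i, c i = a i * z i := fun i => (mul_div_cancel₀ _ (ha i).ne').symm
  have hrow (v : ι → 𝕜) (hv : M *ᵥ v = 0) (i : ι) : ∑ j, M i j * v j = 0 := congrFun hv i
  -- after expanding the square, every part is a multiple of `M *ᵥ a` or of `M *ᵥ c`
  have hquad : ∑ i, ∑ j, M i j * a i * a j * (z i - z j) ^ 2 = 0 := by
    have expand : ∀ i j, M i j * a i * a j * (z i - z j) ^ 2 = a i * z i ^ 2 * (M i j * a j) +
        a j * z j ^ 2 * (M j i * a i) - 2 * c i * (M i j * c j) := by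
      intro i j; rw [hz i, hz j, hM.apply i j]; ring
    simp only [expand, Finset.sum_sub_distrib, Finset.sum_add_distrib, ← Finset.mul_sum,
      hrow a hMa, hrow c hc]
    rw [Finset.sum_comm]
    simp [← Finset.mul_sum, hrow a hMa]
  have hterm_nonpos : ∀ i j, M i j * a i * a j * (z i - z j) ^ 2 ≤ 0 := by
    intro i j
    rcases eq_or_ne i j with rfl | hij
    · simp
    · exact mul_nonpos_of_nonpos_of_nonneg
        (mul_nonpos_of_nonpos_of_nonneg (mul_nonpos_of_nonpos_of_nonneg (hoff i j hij)
          (ha i).le) (ha j).le) (sq_nonneg _)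
  have hterm : ∀ i j, M i j * a i * a j * (z i - z j) ^ 2 = 0 := by
    intro i j
    have hrows := (Finset.sum_eq_zero_iff_of_nonpos fun i _ =>
      Finset.sum_nonpos fun j _ => hterm_nonpos i j).1 hquad i (Finset.mem_univ i)
    exact (Finset.sum_eq_zero_iff_of_nonpos fun j _ => hterm_nonpos i j).1 hrows j
      (Finset.mem_univ j)
  have hlinked : ∀ i j, M i j ≠ 0 → z i = z j := by
    intro i j hij
    have := hterm i j
    simp only [mul_eq_zero, (ha i).ne', (ha j).ne', hij, false_or, pow_eq_zero_iff,
      ne_eq, OfNat.ofNat_ne_zero, not_false_eq_true] at this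
    exact sub_eq_zero.1 this
  obtain hS | hS := hind {i | z i = z i₀} fun i hi j hj => by
    by_contra hij
    exact hj ((hlinked i j hij).symm.trans hi)
  · exact absurd (show i₀ ∈ {i | z i = z i₀} from rfl) (hS ▸ Set.notMem_empty i₀)
  · refine ⟨z i₀, funext fun i => ?_⟩
    have hi : z i = z i₀ := (hS ▸ Set.mem_univ i : i ∈ {i | z i = z i₀})
    rw [hz i, hi, Pi.smul_apply, smul_eq_mul, mul_comm]

end Matrix

def orderLT (l n : ℕ) : Set (Fin l × ℕ) := {p | p.2 < n}

def orderWeight (l : ℕ) (p : Fin l × ℕ) : ℤ := p.2 + 1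

section Pi0

variable {l : ℕ}

lemma orderLT_mono {m n : ℕ} (h : m ≤ n) : orderLT l m ⊆ orderLT l n :=
  fun _ hp => lt_of_lt_of_le hp h

lemma orderWeight_pos (p : Fin l × ℕ) : 0 < orderWeight l p := by
  unfold orderWeight; omega

lemma pa_X (p : Fin l × ℕ) : pa l (X p) = X (p.1, p.2 + 1) := mkDerivation_X _ _ _

lemma pa_mem_supported {n : ℕ} {P : Pi0 l} (hP : P ∈ supported ℂ (orderLT l n)) :
    pa l P ∈ supported ℂ (orderLT l (n+1)) := by
  have hmono : supported ℂ (orderLT l n) ≤ supported ℂ (orderLT l (n+1)) :=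
    supported_mono (orderLT_mono n.le_succ)
  rw [supported_eq_adjoin_X] at hP
  induction hP using Algebra.adjoin_induction with
  | mem x hx =>
    obtain ⟨p, hp, rfl⟩ := hx
    exact pa_X p ▸ X_mem_supported.2 (Nat.succ_lt_succ hp)
  | algebraMap r => simp
  | add x y _ _ hx hy => simpa only [map_add] using add_mem hx hy
  | mul x y hx' hy' hx hy =>
    rw [(pa l).leibniz, smul_eq_mul, smul_eq_mul]
    rw [← supported_eq_adjoin_X] at hx' hy'
    exact add_mem (mul_mem (hmono hx') hy) (mul_mem (hmono hy') hx)

lemma pa_isWeightedHomogeneousDerivation :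
    IsWeightedHomogeneousDerivation (orderWeight l) (pa l) 1 := fun p => by
  rw [pa_X]
  exact isWeightedHomogeneous_X ℂ _ _

lemma MvPolynomial.IsWeightedHomogeneousDerivation.apply_X_eq_zero_of_lt {N : ℕ}
    {R : Derivation ℂ (Pi0 l) (Pi0 l)}
    (hR : IsWeightedHomogeneousDerivation (orderWeight l) R (-(N + 1))) :
    ∀ p ∈ orderLT l N, R (X p) = 0 := fun p hp =>
  (hR p).eq_zero_of_neg orderWeight_pos (by have : p.2 < N := hp; simp only [orderWeight]; omega)

end Pi0

namespace AffineGCM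

variable {l : ℕ} (K : AffineGCM l)

def form (𝕜 : Type*) [Field 𝕜] [CharZero 𝕜] : Matrix (Fin (l+1)) (Fin (l+1)) 𝕜 :=
  fun i j => (K.d i : 𝕜) * (K.A i j : 𝕜)

lemma form_isSymm {𝕜 : Type*} [Field 𝕜] [CharZero 𝕜] : (K.form 𝕜).IsSymm := by
  ext i j
  simpa [form] using congrArg (fun q : ℚ => (q : 𝕜)) (K.dsymm j i)

lemma form_mulVec_label {𝕜 : Type*} [Field 𝕜] [CharZero 𝕜] :
    K.form 𝕜 *ᵥ (fun i => (K.label i : 𝕜)) = 0 := by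
  ext i
  have h := congrArg (fun z : ℤ => (K.d i : 𝕜) * z) (K.null i)
  simp only [Int.cast_sum, Int.cast_mul, Int.cast_natCast, Int.cast_zero, mul_zero,
    Finset.mul_sum] at h
  simp only [Matrix.mulVec, dotProduct, form, Pi.zero_apply, ← h]
  exact Finset.sum_congr rfl fun j _ => by ring

section OrderedField

variable {𝕜 : Type*} [Field 𝕜] [LinearOrder 𝕜] [IsStrictOrderedRing 𝕜]

lemma exists_eq_smul_label_of_mulVec_eq_zero {c : Fin (l+1) → 𝕜} (hc : K.form 𝕜 *ᵥ c = 0) :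
    ∃ μ : 𝕜, c = μ • fun i => (K.label i : 𝕜) := by
  have hd : ∀ i, (K.d i : 𝕜) ≠ 0 := fun i => by exact_mod_cast (K.d_pos i).ne'
  refine Matrix.exists_eq_smul_of_mulVec_eq_zero K.form_isSymm (fun i j hij => ?_)
    (fun S hS => K.indec S fun i hi j hj => ?_) (fun i => by exact_mod_cast K.label_pos i)
    K.form_mulVec_label hc
  · exact mul_nonpos_of_nonneg_of_nonpos (by exact_mod_cast (K.d_pos i).le)
      (by exact_mod_cast K.offdiag i j hij)
  · simpa [form, hd i] using hS i hi j hj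

/-- Column `0` is redundant since `∑_j a_j (α_i, α_j) = 0`. -/
lemma exists_eq_smul_label_of_forall_succ {c : Fin (l+1) → 𝕜}
    (hc : ∀ j : Fin l, ∑ i, c i * K.form 𝕜 i j.succ = 0) :
    ∃ μ : 𝕜, c = μ • fun i => (K.label i : 𝕜) := by
  refine K.exists_eq_smul_label_of_mulVec_eq_zero ?_
  have hsucc : ∀ j : Fin l, (c ᵥ* K.form 𝕜) j.succ = 0 := hc
  have hzero : (c ᵥ* K.form 𝕜) 0 = 0 := by
    have h := Matrix.dotProduct_mulVec c (K.form 𝕜) fun i => (K.label i : 𝕜)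
    rw [K.form_mulVec_label, dotProduct_zero, dotProduct, Fin.sum_univ_succ] at h
    simp only [hsucc, zero_mul, Finset.sum_const_zero, add_zero] at h
    exact (mul_eq_zero.1 h.symm).resolve_right (by exact_mod_cast (K.label_pos 0).ne')
  rw [← K.form_isSymm, Matrix.mulVec_transpose]
  ext j
  cases j using Fin.cases with
  | zero => exact hzero
  | succ j => exact hsucc j

end OrderedField

lemma exists_eq_smul_label {c : Fin (l+1) → ℂ} (hc : ∀ j : Fin l, ∑ i, c i * K.B i j.succ = 0) :
    ∃ μ : ℂ, c = μ • fun i => (K.label i : ℂ) := by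
  have hre : ∀ j : Fin l, ∑ i, (c i).re * K.form ℝ i j.succ = 0 := fun j => by
    simpa [B, form, Complex.re_sum] using congrArg Complex.re (hc j)
  have him : ∀ j : Fin l, ∑ i, (c i).im * K.form ℝ i j.succ = 0 := fun j => by
    simpa [B, form, Complex.im_sum] using congrArg Complex.im (hc j)
  obtain ⟨μ, hμ⟩ := K.exists_eq_smul_label_of_forall_succ hre
  obtain ⟨ν, hν⟩ := K.exists_eq_smul_label_of_forall_succ him
  refine ⟨⟨μ, ν⟩, funext fun i => Complex.ext ?_ ?_⟩
  · simpa using congrFun hμ i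
  · simpa using congrFun hν i

section Extend

variable {M N : Type*} [AddCommGroup M] [Module ℂ M] [AddCommGroup N] [Module ℂ N]

/-- The `0`-th entry is the one forced by `∑ a_i v_i = 0`, as for `u_0^{(n)}`. -/
def extend : (Fin l → M) →ₗ[ℂ] (Fin (l+1) → M) where
  toFun v := Fin.cases (-(1 / (K.label 0 : ℂ)) • ∑ i : Fin l, (K.label i.succ : ℂ) • v i) v
  map_add' v w := by
    ext i
    cases i using Fin.cases <;> simp [smul_add, Finset.sum_add_distrib]
  map_smul' c v := by
    ext i
    cases i using Fin.cases <;> simp [Finset.smul_sum, smul_comm c]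

@[simp]
lemma extend_succ (v : Fin l → M) (k : Fin l) : K.extend v k.succ = v k := rfl

lemma Uv_eq_extend (j : Fin (l+1)) (n : ℕ) : K.Uv j n = K.extend (fun i => u i n) j := rfl

lemma sum_label_smul_extend (v : Fin l → M) : ∑ i, (K.label i : ℂ) • K.extend v i = 0 := by
  have h0 : (K.label 0 : ℂ) ≠ 0 := by exact_mod_cast (K.label_pos 0).ne'
  rw [Fin.sum_univ_succ]
  simp only [extend, LinearMap.coe_mk, AddHom.coe_mk, Fin.cases_zero, Fin.cases_succ]
  rw [smul_smul, mul_neg, mul_one_div_cancel h0, neg_smul, one_smul, neg_add_cancel]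

lemma map_extend (f : M →ₗ[ℂ] N) (v : Fin l → M) (i : Fin (l+1)) :
    f (K.extend v i) = K.extend (fun k => f (v k)) i := by
  cases i using Fin.cases with
  | zero => simp [extend]
  | succ k => rfl

lemma extend_mem (S : Submodule ℂ M) {v : Fin l → M}
    (hv : ∀ k, v k ∈ S) (i : Fin (l+1)) : K.extend v i ∈ S := by
  cases i using Fin.cases with
  | zero => exact S.smul_mem _ (S.sum_mem fun k _ => S.smul_mem _ (hv k))
  | succ k => exact hv k

end Extend

/-- The values `∑ a_i R (Q_i u_j^{(N+1)})` for a derivation `R` killing the variables of order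
`< N` with `R u_k^{(N)} = r_k` (see `apply_Q_X_succ`). -/
def pairingMap : (Fin l → ℂ) →ₗ[ℂ] (Fin l → ℂ) where
  toFun r j := ∑ i, (K.label i : ℂ) * K.extend r i * K.B i j.succ
  map_add' r s := by
    ext j
    simp [add_mul, mul_add, Finset.sum_add_distrib]
  map_smul' c r := by
    ext j
    simp [Finset.mul_sum, mul_left_comm, mul_assoc]

lemma pairingMap_apply (r : Fin l → ℂ) (j : Fin l) :
    K.pairingMap r j = ∑ i, (K.label i : ℂ) * K.extend r i * K.B i j.succ := rfl

lemma pairingMap_injective : Function.Injective K.pairingMap := by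
  refine (injective_iff_map_eq_zero _).2 fun r hr => ?_
  have hlabel : ∀ i, (K.label i : ℂ) ≠ 0 := fun i => by exact_mod_cast (K.label_pos i).ne'
  obtain ⟨μ, hμ⟩ := K.exists_eq_smul_label (c := fun i => (K.label i : ℂ) * K.extend r i)
    fun j => congrFun hr j
  have hconst : ∀ i, K.extend r i = μ := fun i =>
    mul_left_cancel₀ (hlabel i) ((congrFun hμ i).trans (mul_comm _ _))
  have hμ0 : μ * ∑ i, (K.label i : ℂ) = 0 := by
    simpa [hconst, Finset.mul_sum, mul_comm] using K.sum_label_smul_extend r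
  have hsum : ∑ i, (K.label i : ℂ) ≠ 0 := by
    exact_mod_cast (Finset.sum_pos (fun i _ => K.label_pos i) Finset.univ_nonempty).ne'
  ext k
  rw [← K.extend_succ r k, hconst, (mul_eq_zero.1 hμ0).resolve_right hsum, Pi.zero_apply]

lemma pairingMap_surjective : Function.Surjective K.pairingMap :=
  LinearMap.injective_iff_surjective.1 K.pairingMap_injective

lemma Uv_mem_supported (i : Fin (l+1)) (n : ℕ) : K.Uv i n ∈ supported ℂ (orderLT l (n+1)) :=
  K.extend_mem (supported ℂ (orderLT l (n+1))).toSubmodule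
    (v := fun k => u k n) (fun _ => X_mem_supported.2 n.lt_succ_self) i

lemma Uv_isWeightedHomogeneous (i : Fin (l+1)) (n : ℕ) :
    (K.Uv i n).IsWeightedHomogeneous (orderWeight l) (n + 1) :=
  K.extend_mem (weightedHomogeneousSubmodule ℂ (orderWeight l) (n + 1)) (v := fun k => u k n)
    (fun k => isWeightedHomogeneous_X ℂ (orderWeight l) (k, n)) i

lemma pa_Uv (i : Fin (l+1)) (n : ℕ) : pa l (K.Uv i n) = K.Uv i (n+1) := by
  rw [Uv_eq_extend, ← Derivation.coeFn_coe, map_extend]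
  simp only [Derivation.coeFn_coe, u, pa_X]
  rfl

lemma FdB_mem_supported (i : Fin (l+1)) (n : ℕ) : K.FdB i n ∈ supported ℂ (orderLT l n) := by
  induction n with
  | zero => exact one_mem _
  | succ n ih =>
    refine add_mem (mul_mem (neg_mem ?_) (supported_mono (orderLT_mono n.le_succ) ih))
      (pa_mem_supported ih)
    exact supported_mono (orderLT_mono (Nat.succ_le_succ n.zero_le)) (K.Uv_mem_supported i 0)

lemma FdB_succ_add_Uv_mem_supported (i : Fin (l+1)) (n : ℕ) :
    K.FdB i (n+1) + K.Uv i n ∈ supported ℂ (orderLT l n) := by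
  induction n with
  | zero => simp [FdB]
  | succ n ih =>
    have h : K.FdB i (n+2) + K.Uv i (n+1)
        = -K.Uv i 0 * K.FdB i (n+1) + pa l (K.FdB i (n+1) + K.Uv i n) := by
      rw [map_add, pa_Uv, FdB]; ring
    rw [h]
    exact add_mem (mul_mem (neg_mem (supported_mono (orderLT_mono (Nat.succ_le_succ n.zero_le))
      (K.Uv_mem_supported i 0))) (K.FdB_mem_supported i (n+1))) (pa_mem_supported ih)

lemma FdB_isWeightedHomogeneous (i : Fin (l+1)) (n : ℕ) :
    (K.FdB i n).IsWeightedHomogeneous (orderWeight l) n := by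
  induction n with
  | zero => exact isWeightedHomogeneous_one ℂ _
  | succ n ih =>
    refine IsWeightedHomogeneous.add ?_ (by simpa using pa_isWeightedHomogeneousDerivation.apply ih)
    simpa [add_comm] using (K.Uv_isWeightedHomogeneous i 0).neg.mul ih

lemma Q_X (i : Fin (l+1)) (p : Fin l × ℕ) : K.Q i (X p) = -K.B i p.1.succ • K.FdB i p.2 :=
  mkDerivation_X _ _ _

lemma Q_isWeightedHomogeneousDerivation (i : Fin (l+1)) :
    IsWeightedHomogeneousDerivation (orderWeight l) (K.Q i) (-1) := fun p => by
  rw [Q_X, neg_smul, smul_eq_C_mul]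
  simpa [orderWeight] using ((K.FdB_isWeightedHomogeneous i p.2).C_mul (K.B i p.1.succ)).neg

lemma sum_label_mul_B (k : Fin (l+1)) : ∑ i, (K.label i : ℂ) * K.B i k = 0 := by
  have h := congrFun (K.form_mulVec_label (𝕜 := ℂ)) k
  simp only [Matrix.mulVec, dotProduct, Pi.zero_apply] at h
  rw [← h]
  refine Finset.sum_congr rfl fun i _ => ?_
  rw [mul_comm, show K.B i k = K.form ℂ k i from (K.form_isSymm).apply k i]

lemma sum_label_mul_constantCoeff_Q (V : Pi0 l) :
    ∑ i, (K.label i : ℂ) * constantCoeff (K.Q i V) = 0 := by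
  have hsum : ∀ P, ∑ i, (K.label i : ℂ) * constantCoeff (K.Q i P)
      = constantCoeff ((∑ i, (K.label i : ℂ) • K.Q i) P) := fun P => by
    simp [Derivation.finset_sum_apply, smul_eq_C_mul]
  rw [hsum]
  refine constantCoeff_derivation_eq_zero (fun p => ?_) V
  rw [← hsum]
  rcases Nat.eq_zero_or_pos p.2 with h0 | hpos
  · simp [Q_X, h0, FdB, smul_eq_C_mul, Finset.sum_neg_distrib, K.sum_label_mul_B]
  · refine Finset.sum_eq_zero fun i _ => ?_
    rw [Q_X, smul_eq_C_mul, map_mul, constantCoeff_eq,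
      (K.FdB_isWeightedHomogeneous i p.2).coeff_eq_zero 0 (by rw [map_zero]; omega), mul_zero, mul_zero]

section Triangular

variable {R : Derivation ℂ (Pi0 l) (Pi0 l)} {N : ℕ}

lemma apply_Q_X_eq_zero_of_le (hlow : ∀ p ∈ orderLT l N, R (X p) = 0) (i : Fin (l+1))
    {p : Fin l × ℕ} (hp : p.2 ≤ N) : R (K.Q i (X p)) = 0 := by
  rw [Q_X, R.map_smul, derivation_eq_zero_of_mem_supported hlow
    (supported_mono (orderLT_mono hp) (K.FdB_mem_supported i p.2)), smul_zero]

lemma apply_Uv {r : Fin l → ℂ} (htop : ∀ k, R (X (k, N)) = C (r k)) (i : Fin (l+1)) :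
    R (K.Uv i N) = C (K.extend r i) := by
  rw [Uv_eq_extend, ← Derivation.coeFn_coe, map_extend]
  simp only [Derivation.coeFn_coe, u, htop]
  exact (K.map_extend (Algebra.linearMap ℂ (Pi0 l)) r i).symm

lemma apply_Q_X_succ {r : Fin l → ℂ} (hlow : ∀ p ∈ orderLT l N, R (X p) = 0)
    (htop : ∀ k, R (X (k, N)) = C (r k)) (i : Fin (l+1)) (j : Fin l) :
    R (K.Q i (X (j, N+1))) = C (K.B i j.succ * K.extend r i) := by
  have hFdB : R (K.FdB i (N+1)) = -C (K.extend r i) := by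
    have h := derivation_eq_zero_of_mem_supported hlow (K.FdB_succ_add_Uv_mem_supported i N)
    rw [map_add, K.apply_Uv htop] at h
    exact eq_neg_of_add_eq_zero_left h
  rw [Q_X, R.map_smul, hFdB, smul_neg, neg_smul, neg_neg, smul_eq_C_mul, ← C_mul]

end Triangular

lemma exists_derivation_prescribed_on_order (N : ℕ) (r : Fin l → ℂ) :
    ∃ R : Derivation ℂ (Pi0 l) (Pi0 l), (∀ P, (∀ i, K.Q i P = 0) → R P = 0) ∧
      IsWeightedHomogeneousDerivation (orderWeight l) R (-(N + 1)) ∧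
      ∀ k, R (X (k, N)) = C (r k) := by
  obtain ⟨r', hr'⟩ := K.pairingMap_surjective (-r)
  induction N generalizing r r' with
  | zero =>
    refine ⟨∑ i, ((K.label i : ℂ) * K.extend r' i) • K.Q i, fun P hP => ?_, ?_, fun k => ?_⟩
    · simp [Derivation.finset_sum_apply, hP]
    · simpa using IsWeightedHomogeneousDerivation.sum_smul Finset.univ _
        fun i _ => K.Q_isWeightedHomogeneousDerivation i
    · have hk := congrFun hr' k
      simp only [pairingMap_apply, Pi.neg_apply] at hk
      simp only [Derivation.finset_sum_apply, Derivation.coe_smul, Pi.smul_apply, Q_X, FdB,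
        neg_smul, smul_eq_C_mul, mul_one, smul_neg, C_mul, map_natCast, Finset.sum_neg_distrib]
      rw [← neg_neg (r k), ← hk, map_neg, map_sum]
      simp only [map_mul, map_natCast]
  | succ N ih =>
    obtain ⟨r'', hr''⟩ := K.pairingMap_surjective (-r')
    obtain ⟨R, hRker, hRhom, hRtop⟩ := ih r' r'' hr''
    refine ⟨∑ i, (K.label i : ℂ) • ⁅K.Q i, R⁆, fun P hP => ?_, ?_, fun k => ?_⟩
    · simp [Derivation.finset_sum_apply, Derivation.commutator_apply, hP, hRker P hP]
    · convert IsWeightedHomogeneousDerivation.sum_smul Finset.univ _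
        fun i _ => (K.Q_isWeightedHomogeneousDerivation i).lie hRhom using 1
      push_cast; ring
    · -- `R u_k^{(N+1)}` has weight `1`, so the `Q_i` map it to constants
      have hQW : ∀ i, K.Q i (R (X (k, N+1))) = C (constantCoeff (K.Q i (R (X (k, N+1))))) :=
        fun i => ((K.Q_isWeightedHomogeneousDerivation i).apply
          (by simpa [orderWeight] using hRhom (k, N+1))).eq_C_of_zero orderWeight_pos
      have hk := congrFun hr' k
      simp only [pairingMap_apply, Pi.neg_apply] at hk
      rw [← neg_neg (r k), ← hk, ← zero_sub, ← K.sum_label_mul_constantCoeff_Q (R (X (k, N+1))),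
        ← Finset.sum_sub_distrib, map_sum, Derivation.finset_sum_apply]
      refine Finset.sum_congr rfl fun i _ => ?_
      rw [Derivation.smul_apply, Derivation.commutator_apply, hQW,
        K.apply_Q_X_succ hRhom.apply_X_eq_zero_of_lt hRtop, smul_eq_C_mul, ← C_sub, ← C_mul,
        constantCoeff_C]
      congr 1
      ring

lemma exists_derivation_eqOn_pderiv (p : Fin l × ℕ) :
    ∃ R : Derivation ℂ (Pi0 l) (Pi0 l), (∀ P, (∀ i, K.Q i P = 0) → R P = 0) ∧
      ∀ P ∈ supported ℂ (orderLT l (p.2 + 1)), R P = pderiv p P := by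
  classical
  obtain ⟨R, hRker, hRhom, hRtop⟩ := K.exists_derivation_prescribed_on_order p.2 (Pi.single p.1 1)
  refine ⟨R, hRker, fun P hP => derivation_eqOn_supported (fun q hq => ?_) hP⟩
  simp only [Function.comp_apply, pderiv_X]
  rcases (Nat.lt_succ_iff_lt_or_eq.1 hq) with hlt | heq
  · rw [hRhom.apply_X_eq_zero_of_lt q hlt, Pi.single_eq_of_ne]
    rintro rfl
    exact hlt.ne rfl
  · obtain ⟨j, n⟩ := q
    obtain ⟨k, m⟩ := p
    obtain rfl : n = m := heq
    rw [hRtop]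
    by_cases hjk : j = k
    · subst hjk; simp
    · simp [hjk]

lemma exists_eq_C_of_forall_Q_eq_zero {P : Pi0 l} (hP : ∀ i, K.Q i P = 0) : ∃ c, P = C c := by
  suffices h : ∀ N, P ∈ supported ℂ (orderLT l N) → ∃ c, P = C c from
    h _ (mem_supported.2 fun p hp =>
      Nat.lt_succ_of_le (Finset.le_sup (f := fun p : Fin l × ℕ => p.2) hp))
  intro N
  induction N with
  | zero =>
    intro h
    rw [show orderLT l 0 = ∅ from Set.eq_empty_of_forall_notMem fun p hp => Nat.not_lt_zero _ hp,
      supported_empty, Algebra.mem_bot] at h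
    obtain ⟨c, rfl⟩ := h
    exact ⟨c, rfl⟩
  | succ N ih =>
    intro hN
    refine ih (mem_supported.2 fun p hp => ?_)
    have hpN : p.2 < N + 1 := mem_supported.1 hN hp
    refine lt_of_le_of_ne (Nat.le_of_lt_succ hpN) fun hpeq => pderiv_ne_zero_of_mem_vars hp ?_
    obtain ⟨R, hRker, hR⟩ := K.exists_derivation_eqOn_pderiv p
    rw [← hR P (hpeq ▸ hN), hRker P hP]

lemma derivation_X_eq_zero_of_commute {D : Derivation ℂ (Pi0 l) (Pi0 l)}
    (hD : ∀ i P, D (K.Q i P) = K.Q i (D P)) (n : ℕ) : ∀ p ∈ orderLT l n, D (X p) = 0 := by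
  induction n with
  | zero => exact fun p hp => absurd hp (Nat.not_lt_zero _)
  | succ n ih =>
    have hconst : ∀ k, ∃ c, D (X (k, n)) = C c := fun k =>
      K.exists_eq_C_of_forall_Q_eq_zero fun i => by rw [← hD, K.apply_Q_X_eq_zero_of_le ih i le_rfl]
    choose c hc using hconst
    have hc0 : c = 0 := K.pairingMap_injective <| funext fun j => by
      have h := K.sum_label_mul_constantCoeff_Q (D (X (j, n+1)))
      simp only [← hD, K.apply_Q_X_succ ih hc, constantCoeff_C] at h
      rw [pairingMap_apply, map_zero, Pi.zero_apply, ← h]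
      exact Finset.sum_congr rfl fun i _ => by ring
    rintro ⟨k, m⟩ hm
    rcases Nat.lt_succ_iff_lt_or_eq.1 hm with hlt | rfl
    · exact ih _ hlt
    · rw [hc, hc0, Pi.zero_apply, map_zero]

end AffineGCM

theorem no_invariant_vector_fields_general (l : ℕ) (K : AffineGCM l)
    (D : Derivation ℂ (Pi0 l) (Pi0 l))
    (hD : ∀ (i : Fin (l+1)) (P : Pi0 l), D (K.Q i P) = K.Q i (D P)) :
    D = 0 :=
  derivation_ext fun p => K.derivation_X_eq_zero_of_commute hD (p.2 + 1) p p.2.lt_succ_self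

/-- a `ℂ`-derivation of `π₀` commuting with all the `Q_i` is zero. -/
theorem no_invariant_vector_fields (l : ℕ) (hl : 1 ≤ l) (K : AffineGCM l)
    (D : Derivation ℂ (Pi0 l) (Pi0 l))
    (hD : ∀ (i : Fin (l+1)) (P : Pi0 l), D (K.Q i P) = K.Q i (D P)) :
    D = 0 :=
  no_invariant_vector_fields_general l K D hD
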